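/- The collection Σ of covtree certificate sets together with the empty set is a semi-ring of subsets of Ω: it contains ∅, is closed under pairwise intersection (the intersection of two certificate sets is either one of them or empty), and the difference cert(Γₙ) ∖ cert(Γₘ), when cert(Γₘ) ⊆ cert(Γₙ), is a finite disjoint union of certificate sets. -/

import Mathlib

/-- A finite labeled order: a partial order structure on `Fin n`. -/
abbrev FinOrd (n : ℕ) := PartialOrder (Fin n)

/-- Isomorphism of two orders on `Fin n`. -/
def OrdIso {n : ℕ} (p q : FinOrd n) : Prop :=
  Nonempty (p.le ≃r q.le)

instance ordSetoid (n : ℕ) : Setoid (FinOrd n) where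
  r := OrdIso
  iseqv := by
    refine ⟨fun p => ⟨RelIso.refl _⟩, ?_, ?_⟩
    · rintro p q ⟨e⟩; exact ⟨e.symm⟩
    · rintro p q r ⟨e⟩ ⟨f⟩; exact ⟨e.trans f⟩

/-- An `n`-order: an isomorphism class of partial orders of cardinality `n`. -/
def NOrder (n : ℕ) := Quotient (ordSetoid n)

/-- `B` (a partial order on `Fin n`) occurs as a stem (finite downward-closed
subcauset) in the partial order `p` on `α`. -/
def StemIn {n : ℕ} {α : Type*} (B : FinOrd n) (p : PartialOrder α) : Prop :=
  ∃ f : Fin n → α, Function.Injective f ∧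
    (∀ i j : Fin n, B.le i j ↔ p.le (f i) (f j)) ∧
    (∀ (i : Fin n) (y : α), p.lt y (f i) → ∃ j : Fin n, f j = y)

/-- The `n`-order `B` is a stem in the order `p`. -/
def QStemIn {n : ℕ} {α : Type*} (B : NOrder n) (p : PartialOrder α) : Prop :=
  ∃ b : FinOrd n, ⟦b⟧ = B ∧ StemIn b p

/-- The set of `k`-stems of `p`, as a set of `k`-orders. -/
def stems (k : ℕ) {α : Type*} (p : PartialOrder α) : Set (NOrder k) :=
  {B | QStemIn B p}

/-- Stem relation between unlabeled finite orders: `S` is a stem in `T`. -/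
def NStemIn {n m : ℕ} (S : NOrder n) (T : NOrder m) : Prop :=
  ∃ t : FinOrd m, ⟦t⟧ = T ∧ QStemIn S t

/-- An order is past-finite if every element has finitely many elements below it. -/
def PastFinite {α : Type*} (p : PartialOrder α) : Prop :=
  ∀ x : α, {y : α | p.lt y x}.Finite

/-- The operation sending a set of `n`-orders to the set of `(n-1)`-stems of its
elements. -/
def Ominus (n : ℕ) (Γ : Set (NOrder n)) : Set (NOrder (n - 1)) :=
  {B | ∃ A ∈ Γ, NStemIn B A}

/-- The `j`-fold iterate of `Ominus`. -/
def OminusIter : (j : ℕ) → (n : ℕ) → Set (NOrder n) → Set (NOrder (n - j))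
  | 0, _, Γ => Γ
  | j + 1, n, Γ => Ominus (n - j) (OminusIter j n Γ)

/-- `Γ` is a node of covtree at level `n`: it is nonempty and has a certificate,
i.e. a (finite or countably infinite) past-finite order whose set of `n`-stems
is exactly `Γ`. -/
def IsNode (n : ℕ) (Γ : Set (NOrder n)) : Prop :=
  Γ.Nonempty ∧ ∃ (α : Type) (p : PartialOrder α), Countable α ∧ PastFinite p ∧
    stems n p = Γ


/-- An infinite path in covtree, starting at the root: for each `n` a node of
covtree at level `n` (a nonempty set of `n`-orders admitting a certificate),
each node being directly below the next via the `O₋` operation.  (Level `0`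
carries the trivial node consisting of the empty order.) -/
structure CovPath where
  node : (n : ℕ) → Set (NOrder n)
  nonempty : ∀ n, (node n).Nonempty
  isNode : ∀ n, IsNode n (node n)
  link : ∀ n, Ominus (n + 1) (node (n + 1)) = node n

/-- A naturally labeled infinite causet: a partial order on `ℕ` in which
`i ≺ j` implies `i < j` (hence past-finite). -/
def NatCauset := {p : PartialOrder ℕ // ∀ i j : ℕ, p.lt i j → i < j}

instance natSetoid : Setoid NatCauset where
  r p q := Nonempty (p.val.le ≃r q.val.le)
  iseqv := by
    refine ⟨fun p => ⟨RelIso.refl _⟩, ?_, ?_⟩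
    · rintro p q ⟨e⟩; exact ⟨e.symm⟩
    · rintro p q r ⟨e⟩ ⟨f⟩; exact ⟨e.trans f⟩

/-- The space `Ω` of infinite orders: isomorphism classes of countable
past-finite infinite causets. -/
def InfOrd := Quotient natSetoid

/-- The set of `n`-stems of an infinite order. -/
def Nstems (n : ℕ) (C : InfOrd) : Set (NOrder n) :=
  {B | ∃ c : NatCauset, ⟦c⟧ = C ∧ QStemIn B c.val}

/-- The stem set of an `n`-order `B`: the set of infinite orders containing `B`
as a stem. -/
def stemSet {n : ℕ} (B : NOrder n) : Set InfOrd :=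
  {C | B ∈ Nstems n C}

/-- The certificate set of a set `Γ` of `n`-orders: the set of infinite orders
whose set of `n`-stems is exactly `Γ`. -/
def certSet {n : ℕ} (Γ : Set (NOrder n)) : Set InfOrd :=
  {C | Nstems n C = Γ}

/-- The rogue equivalence relation: two infinite orders are equivalent iff they
have the same `n`-stems for every `n`. -/
instance rogueSetoid : Setoid InfOrd where
  r A B := ∀ n, Nstems n A = Nstems n B
  iseqv := by
    refine ⟨fun A n => rfl, ?_, ?_⟩
    · intro A B h n; exact (h n).symm
    · intro A B C h h' n; exact (h n).trans (h' n)

/-- The quotient `Ω/∼_R` of infinite orders by the rogue equivalence. -/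
def RQuot := Quotient rogueSetoid

open scoped Classical in
/-- The distance between two infinite orders: `2⁻ⁿ` where `n` is the largest
integer such that the two orders have the same set of `n`-stems, and `0` if
they have the same stems of every cardinality. -/
noncomputable def preDist (A B : InfOrd) : ℝ :=
  if ∀ n, Nstems n A = Nstems n B then 0
  else (2 : ℝ)⁻¹ ^ sSup {k : ℕ | Nstems k A = Nstems k B}

/-- The induced metric on the quotient `Ω/∼_R`. -/
noncomputable def rdist : RQuot → RQuot → ℝ :=
  Quotient.lift₂ preDist (by
    intro a b a' b' ha hb
    have h : ∀ k, (Nstems k a = Nstems k b) ↔ (Nstems k a' = Nstems k b') := by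
      intro k; rw [ha k, hb k]
    unfold preDist
    by_cases hall : ∀ n, Nstems n a = Nstems n b
    · rw [if_pos hall, if_pos (fun n => (h n).mp (hall n))]
    · rw [if_neg hall, if_neg (fun hc => hall (fun n => (h n).mpr (hc n)))]
      congr 1
      apply congrArg
      ext k
      exact h k)

/-- The image of a certificate set in the quotient `Ω/∼_R`. -/
def certR {n : ℕ} (Γ : Set (NOrder n)) : Set RQuot :=
  (fun C : InfOrd => (⟦C⟧ : RQuot)) '' certSet Γ

/-- The diameter of a subset of `Ω/∼_R`: the supremum of distances between its
points. -/
noncomputable def rdiam (S : Set RQuot) : ℝ :=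
  sSup {r : ℝ | ∃ x ∈ S, ∃ y ∈ S, rdist x y = r}


/-- The collection `Σ` of covtree certificate sets, together with `∅`. -/
def SigmaColl : Set (Set InfOrd) :=
  {s | s = ∅ ∨ ∃ (n : ℕ) (Γ : Set (NOrder n)), IsNode n Γ ∧ s = certSet Γ}

/-!
For `n ≤ m` every `n`-stem of a naturally labeled causet extends to an `m`-stem (adjoin the
least missing label), so the `n`-stems of an infinite order are the `n`-stems of its `m`-stems
and `Nstems n` factors through `Nstems m`. Hence two certificate sets are nested or disjoint,
and every member of `Σ` is a preimage under `Nstems m` for all large `m`. A difference of two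
such preimages is again one, i.e. a union of fibres `certSet Γ` of `Nstems m`: these are
pairwise disjoint and finitely many, since there are finitely many `m`-orders.
-/

open Function

section Stems

variable {n m : ℕ} {α β : Type*}

lemma stemIn_refl (b : FinOrd n) : StemIn b b :=
  ⟨id, injective_id, fun _ _ => Iff.rfl, fun _ y _ => ⟨y, rfl⟩⟩

lemma StemIn.trans {b : FinOrd n} {t : FinOrd m} {p : PartialOrder α}
    (hbt : StemIn b t) (htp : StemIn t p) : StemIn b p := by
  obtain ⟨f, hf, hfo, hfd⟩ := hbt
  obtain ⟨g, hg, hgo, hgd⟩ := htp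
  refine ⟨g ∘ f, hg.comp hf, fun i j => (hfo i j).trans (hgo _ _), fun i y hy => ?_⟩
  obtain ⟨j, rfl⟩ := hgd (f i) y hy
  have hlt : t.lt j (f i) := by
    simp only [t.lt_iff_le_not_ge, p.lt_iff_le_not_ge, hgo] at hy ⊢
    exact hy
  obtain ⟨k, hk⟩ := hfd i j hlt
  exact ⟨k, congrArg g hk⟩

lemma StemIn.of_relIso {b : FinOrd n} {p : PartialOrder α} {q : PartialOrder β}
    (e : p.le ≃r q.le) (h : StemIn b p) : StemIn b q := by
  obtain ⟨f, hf, hfo, hfd⟩ := h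
  refine ⟨e ∘ f, e.injective.comp hf, fun i j => (hfo i j).trans e.map_rel_iff.symm,
    fun i y hy => ?_⟩
  have hlt : p.lt (e.symm y) (f i) := by
    rw [← e.apply_symm_apply y] at hy
    simp only [p.lt_iff_le_not_ge, q.lt_iff_le_not_ge, comp_apply, e.map_rel_iff] at hy ⊢
    exact hy
  obtain ⟨j, hj⟩ := hfd i _ hlt
  exact ⟨j, by simp [hj]⟩

end Stems

lemma Set.Finite.exists_notMem_forall_lt_mem {s : Set ℕ} (hs : s.Finite) :
    ∃ x ∉ s, ∀ y < x, y ∈ s := by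
  classical
  have h : ∃ x, x ∉ s := hs.exists_notMem
  exact ⟨Nat.find h, Nat.find_spec h, fun y hy => not_not.mp (Nat.find_min h hy)⟩

section NatCauset

variable {n m : ℕ}

lemma NatCauset.exists_stemIn_succ (c : NatCauset) {b : FinOrd n} (hb : StemIn b c.val) :
    ∃ b' : FinOrd (n + 1), StemIn b' c.val ∧ StemIn b b' := by
  obtain ⟨f, hf, hfo, hfd⟩ := hb
  obtain ⟨x, hx, hxmin⟩ := (Set.finite_range f).exists_notMem_forall_lt_mem
  set f' : Fin (n + 1) → ℕ := Fin.snoc f x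
  have hf' : Injective f' := Fin.snoc_injective_of_injective hf hx
  have hcast : ∀ i : Fin n, f' i.castSucc = f i := fun i => by simp [f']
  refine ⟨@PartialOrder.lift _ _ c.val f' hf',
    ⟨f', hf', fun _ _ => Iff.rfl, fun i y hy => ?_⟩,
    ⟨Fin.castSucc, Fin.castSucc_injective n, fun i j => ?_, fun i y hy => ?_⟩⟩
  · change y ∈ Set.range f'
    rw [Fin.range_snoc]
    refine .inr ?_
    induction i using Fin.lastCases with
    | last => exact hxmin y (c.2 y x (by simpa [f'] using hy))
    | cast i => exact hfd i y (by simpa [f'] using hy)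
  · change b.le i j ↔ c.val.le (f' i.castSucc) (f' j.castSucc)
    rw [hcast, hcast]
    exact hfo i j
  · change c.val.lt (f' y) (f' i.castSucc) at hy
    rw [hcast] at hy
    obtain ⟨j, hj⟩ := hfd i _ hy
    exact ⟨j, hf' (by rw [hcast, hj])⟩

lemma NatCauset.exists_stemIn_of_le (c : NatCauset) (h : n ≤ m) {b : FinOrd n}
    (hb : StemIn b c.val) : ∃ a : FinOrd m, StemIn a c.val ∧ StemIn b a := by
  induction m, h using Nat.le_induction with
  | base => exact ⟨b, hb, stemIn_refl b⟩
  | succ m _ ih =>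
    obtain ⟨a, ha, hba⟩ := ih
    obtain ⟨a', ha', haa'⟩ := c.exists_stemIn_succ ha
    exact ⟨a', ha', hba.trans haa'⟩

lemma NatCauset.exists_stemIn (c : NatCauset) (n : ℕ) : ∃ a : FinOrd n, StemIn a c.val := by
  have h₀ : StemIn (inferInstance : FinOrd 0) c.val :=
    ⟨Fin.elim0, fun i => i.elim0, fun i => i.elim0, fun i => i.elim0⟩
  obtain ⟨a, ha, -⟩ := c.exists_stemIn_of_le (Nat.zero_le n) h₀
  exact ⟨a, ha⟩

lemma NatCauset.pastFinite (c : NatCauset) : PastFinite c.val := fun x =>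
  (Set.finite_Iio x).subset fun y hy => c.2 y x hy

lemma nstems_mk (c : NatCauset) : Nstems n ⟦c⟧ = stems n c.val := by
  ext B
  constructor
  · rintro ⟨c', hc', b, hb, hs⟩
    obtain ⟨e⟩ := Quotient.exact hc'
    exact ⟨b, hb, hs.of_relIso e⟩
  · rintro ⟨b, hb, hs⟩
    exact ⟨c, rfl, b, hb, hs⟩

lemma isNode_nstems (n : ℕ) (C : InfOrd) : IsNode n (Nstems n C) := by
  obtain ⟨c, rfl⟩ := Quotient.exists_rep C
  obtain ⟨a, ha⟩ := c.exists_stemIn n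
  rw [nstems_mk]
  exact ⟨⟨⟦a⟧, a, rfl, ha⟩, ℕ, c.val, inferInstance, c.pastFinite, rfl⟩

end NatCauset

instance FinOrd.finite (n : ℕ) : Finite (FinOrd n) :=
  Finite.of_injective (fun p : FinOrd n => p.le) fun _ _ hpq =>
    PartialOrder.ext fun a b => iff_of_eq (congrFun (congrFun hpq a) b)

instance NOrder.finite (n : ℕ) : Finite (NOrder n) := Quotient.finite (ordSetoid n)

/-- The paper's `O₋^{m-n}(Γ)` for `n ≤ m`, indexed by the target level `n`. -/
def lowerStems (n : ℕ) {m : ℕ} (Γ : Set (NOrder m)) : Set (NOrder n) :=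
  {B | ∃ A ∈ Γ, NStemIn B A}

section Levels

variable {n m : ℕ}

lemma nstems_eq_lowerStems (h : n ≤ m) (C : InfOrd) :
    Nstems n C = lowerStems n (Nstems m C) := by
  obtain ⟨c, rfl⟩ := Quotient.exists_rep C
  ext B
  simp only [nstems_mk, stems, lowerStems]
  constructor
  · rintro ⟨b, hb, hsb⟩
    obtain ⟨a, ha, hba⟩ := c.exists_stemIn_of_le h hsb
    exact ⟨⟦a⟧, ⟨a, rfl, ha⟩, a, rfl, b, hb, hba⟩
  · rintro ⟨A, ⟨a, rfl, hsa⟩, t, hT, b, hb, hbt⟩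
    obtain ⟨e⟩ := Quotient.exact hT
    exact ⟨b, hb, (hbt.of_relIso e).trans hsa⟩

lemma certSet_subset_of_le (h : n ≤ m) {Γn : Set (NOrder n)} {Γm : Set (NOrder m)}
    (hne : (certSet Γn ∩ certSet Γm).Nonempty) : certSet Γm ⊆ certSet Γn := by
  obtain ⟨C, hCn, hCm⟩ := hne
  intro C' hC'
  change Nstems n C' = Γn
  rw [nstems_eq_lowerStems h, ← hCn, nstems_eq_lowerStems h, hC', hCm]

lemma certSet_inter_certSet_eq (Γn : Set (NOrder n)) (Γm : Set (NOrder m)) :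
    certSet Γn ∩ certSet Γm = certSet Γn ∨ certSet Γn ∩ certSet Γm = certSet Γm ∨
      certSet Γn ∩ certSet Γm = ∅ := by
  rcases (certSet Γn ∩ certSet Γm).eq_empty_or_nonempty with hempty | hne
  · exact .inr (.inr hempty)
  rcases le_total n m with h | h
  · exact .inr (.inl (Set.inter_eq_right.mpr (certSet_subset_of_le h hne)))
  · exact .inl (Set.inter_eq_left.mpr (certSet_subset_of_le h (Set.inter_comm .. ▸ hne)))

lemma certSet_eq_preimage (h : n ≤ m) (Γ : Set (NOrder n)) :
    certSet Γ = Nstems m ⁻¹' {Γ' | lowerStems n Γ' = Γ} := by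
  ext C
  simp [certSet, nstems_eq_lowerStems h]

lemma certSet_mem_sigmaColl (Γ : Set (NOrder n)) : certSet Γ ∈ SigmaColl := by
  rcases (certSet Γ).eq_empty_or_nonempty with hempty | ⟨C, rfl⟩
  · exact .inl hempty
  · exact .inr ⟨n, _, isNode_nstems n C, rfl⟩

lemma inter_mem_sigmaColl {s t : Set InfOrd} (hs : s ∈ SigmaColl) (ht : t ∈ SigmaColl) :
    s ∩ t ∈ SigmaColl := by
  rcases hs with rfl | ⟨n, Γn, -, rfl⟩
  · rw [Set.empty_inter]; exact .inl rfl
  rcases ht with rfl | ⟨m, Γm, -, rfl⟩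
  · rw [Set.inter_empty]; exact .inl rfl
  rcases certSet_inter_certSet_eq Γn Γm with h | h | h <;> rw [h]
  · exact certSet_mem_sigmaColl Γn
  · exact certSet_mem_sigmaColl Γm
  · exact .inl rfl

lemma exists_preimage_of_mem_sigmaColl {s : Set InfOrd} (hs : s ∈ SigmaColl) :
    ∃ n, ∀ m ≥ n, ∃ S : Set (Set (NOrder m)), s = Nstems m ⁻¹' S := by
  rcases hs with rfl | ⟨n, Γ, -, rfl⟩
  · exact ⟨0, fun m _ => ⟨∅, rfl⟩⟩
  · exact ⟨n, fun m h => ⟨_, certSet_eq_preimage h Γ⟩⟩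

lemma exists_finset_preimage_eq_sUnion (S : Set (Set (NOrder m))) :
    ∃ F : Finset (Set InfOrd), (F : Set (Set InfOrd)) ⊆ SigmaColl ∧
      (F : Set (Set InfOrd)).PairwiseDisjoint id ∧
      Nstems m ⁻¹' S = ⋃₀ (F : Set (Set InfOrd)) := by
  refine ⟨(S.toFinite.image certSet).toFinset, ?_, ?_, ?_⟩ <;>
    rw [Set.Finite.coe_toFinset]
  · rintro _ ⟨Γ, -, rfl⟩
    exact certSet_mem_sigmaColl Γ
  · rintro _ ⟨Γ, -, rfl⟩ _ ⟨Γ', -, rfl⟩ hne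
    exact Set.disjoint_left.mpr fun C (hC : Nstems m C = Γ) (hC' : Nstems m C = Γ') =>
      hne (congrArg certSet (hC.symm.trans hC'))
  · ext C
    simp [certSet]

end Levels

/-- The collection `Σ` of covtree certificate sets together
with the empty set is a semi-ring of subsets of `Ω`: it contains `∅`, is closed
under pairwise intersection (indeed the intersection of two certificate sets is
one of them or empty), and the difference of nested members is a finite
disjoint union of members. -/
theorem sigmaColl_isSemiring :
    (∅ : Set InfOrd) ∈ SigmaColl ∧
    (∀ s ∈ SigmaColl, ∀ t ∈ SigmaColl, s ∩ t ∈ SigmaColl) ∧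
    (∀ (n m : ℕ) (Γn : Set (NOrder n)) (Γm : Set (NOrder m)),
      IsNode n Γn → IsNode m Γm →
      certSet Γn ∩ certSet Γm = certSet Γn ∨
      certSet Γn ∩ certSet Γm = certSet Γm ∨
      certSet Γn ∩ certSet Γm = ∅) ∧
    (∀ s ∈ SigmaColl, ∀ t ∈ SigmaColl, s ⊆ t →
      ∃ F : Finset (Set InfOrd), (F : Set (Set InfOrd)) ⊆ SigmaColl ∧
        (F : Set (Set InfOrd)).PairwiseDisjoint id ∧
        t \ s = ⋃₀ (F : Set (Set InfOrd))) := by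
  refine ⟨.inl rfl, fun s hs t ht => inter_mem_sigmaColl hs ht,
    fun n m Γn Γm _ _ => certSet_inter_certSet_eq Γn Γm, fun s hs t ht _ => ?_⟩
  obtain ⟨n, hn⟩ := exists_preimage_of_mem_sigmaColl hs
  obtain ⟨m, hm⟩ := exists_preimage_of_mem_sigmaColl ht
  obtain ⟨S, rfl⟩ := hn (max n m) (le_max_left n m)
  obtain ⟨T, rfl⟩ := hm (max n m) (le_max_right n m)
  rw [← Set.preimage_sdiff]
  exact exists_finset_preimage_eq_sUnion (T \ S)
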